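/- Let V₁ and V₂ be isometries defining irreducible quantum Markov chains with the same environment dimension k and system dimensions d₁ and d₂, with stationary states ρ₁ˢˢ, ρ₂ˢˢ. Suppose the chains are output equivalent, i.e. for every n ≥ 1 and all words i, j of length n, tr(K_{1,i} ρ₁ˢˢ K_{1,j}ᴴ) = tr(K_{2,i} ρ₂ˢˢ K_{2,j}ᴴ). Then the linear map T₁₂ on d₁×d₂ complex matrices defined by T₁₂(X) = V₁ᴴ (X ⊗ 1_k) V₂ admits an eigenvalue of modulus one: there exist c ∈ ℂ with |c| = 1 and a nonzero d₁×d₂ matrix F with T₁₂(F) = cF. -/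

import Mathlib

open Matrix Filter
open scoped Kronecker ComplexConjugate ComplexOrder

noncomputable section

namespace QMCPaper

/-- The `j`-th block (Kraus operator style) of a `(d₁·k)×d₂` matrix. -/
def blk {d₁ d₂ k : ℕ} (V : Matrix (Fin d₁ × Fin k) (Fin d₂) ℂ) (j : Fin k) :
    Matrix (Fin d₁) (Fin d₂) ℂ :=
  fun a b => V (a, j) b

/-- The Kraus operators of a QMC isometry. -/
def kraus {d k : ℕ} (V : Matrix (Fin d × Fin k) (Fin d) ℂ) (j : Fin k) :
    Matrix (Fin d) (Fin d) ℂ :=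
  blk V j

/-- The transition channel `T_V(X) = Vᴴ (X ⊗ 1_k) V = Σ_j K_jᴴ X K_j`. -/
def chan {d k : ℕ} (V : Matrix (Fin d × Fin k) (Fin d) ℂ)
    (X : Matrix (Fin d) (Fin d) ℂ) : Matrix (Fin d) (Fin d) ℂ :=
  ∑ j : Fin k, (kraus V j)ᴴ * X * kraus V j

/-- The predual channel `T_{V*}(ρ) = Σ_j K_j ρ K_jᴴ`. -/
def predual {d k : ℕ} (V : Matrix (Fin d × Fin k) (Fin d) ℂ)
    (ρ : Matrix (Fin d) (Fin d) ℂ) : Matrix (Fin d) (Fin d) ℂ :=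
  ∑ j : Fin k, kraus V j * ρ * (kraus V j)ᴴ

/-- A state: positive semidefinite matrix of trace one. -/
def IsState {d : ℕ} (ρ : Matrix (Fin d) (Fin d) ℂ) : Prop :=
  ρ.PosSemidef ∧ ρ.trace = 1

/-- `V` is an isometry defining an irreducible QMC with (unique, faithful) stationary
state `ρss`. -/
def IsIrreducible {d k : ℕ} (V : Matrix (Fin d × Fin k) (Fin d) ℂ)
    (ρss : Matrix (Fin d) (Fin d) ℂ) : Prop :=
  Vᴴ * V = 1 ∧ IsState ρss ∧ predual V ρss = ρss ∧ ρss.PosDef ∧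
    ∀ ρ, IsState ρ → predual V ρ = ρ → ρ = ρss

/-- For a word `i = (i_0, …, i_{n-1})`, the operator `K_i = K_{i_{n-1}} ⋯ K_{i_0}`. -/
def krausWord {d k : ℕ} (V : Matrix (Fin d × Fin k) (Fin d) ℂ) {n : ℕ}
    (i : Fin n → Fin k) : Matrix (Fin d) (Fin d) ℂ :=
  ((List.ofFn i).reverse.map (kraus V)).prod

/-- The output state at time `n` with initial system state `ρ`:
its `(i,j)` entry is `tr(K_i ρ K_jᴴ)`. -/
def outState {d k : ℕ} (V : Matrix (Fin d × Fin k) (Fin d) ℂ)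
    (ρ : Matrix (Fin d) (Fin d) ℂ) (n : ℕ) :
    Matrix (Fin n → Fin k) (Fin n → Fin k) ℂ :=
  fun i j => (krausWord V i * ρ * (krausWord V j)ᴴ).trace

/-- Output equivalence (with given initial states): equality of all output states. -/
def OutputEquiv {d₁ d₂ k : ℕ}
    (V₁ : Matrix (Fin d₁ × Fin k) (Fin d₁) ℂ) (ρ₁ : Matrix (Fin d₁) (Fin d₁) ℂ)
    (V₂ : Matrix (Fin d₂ × Fin k) (Fin d₂) ℂ) (ρ₂ : Matrix (Fin d₂) (Fin d₂) ℂ) : Prop :=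
  ∀ n : ℕ, 1 ≤ n → ∀ i j : Fin n → Fin k,
    (krausWord V₁ i * ρ₁ * (krausWord V₁ j)ᴴ).trace =
      (krausWord V₂ i * ρ₂ * (krausWord V₂ j)ᴴ).trace

/-- A (possibly rectangular) unitary matrix. -/
def IsUnitaryMat {d₁ d₂ : ℕ} (W : Matrix (Fin d₁) (Fin d₂) ℂ) : Prop :=
  Wᴴ * W = 1 ∧ W * Wᴴ = 1

end QMCPaper

namespace QMCPaper

/-- The map `T₁₂(X) = V₁ᴴ (X ⊗ 1_k) V₂` between two QMCs. -/
def chan12 {d₁ d₂ k : ℕ} (V₁ : Matrix (Fin d₁ × Fin k) (Fin d₁) ℂ)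
    (V₂ : Matrix (Fin d₂ × Fin k) (Fin d₂) ℂ)
    (X : Matrix (Fin d₁) (Fin d₂) ℂ) : Matrix (Fin d₁) (Fin d₂) ℂ :=
  V₁ᴴ * (X ⊗ₖ (1 : Matrix (Fin k) (Fin k) ℂ)) * V₂

/-!
If `T₁₂` had no eigenvalue of modulus one, then, being a contraction for the operator norm (the
`Vᵢ` are isometries), all its eigenvalues would lie in the open unit disc; by Gelfand's formula
`T₁₂ⁿ → 0`. Output equivalence rewrites the purity `∑_{i,j} |tr(K_{1,i} ρ₁ K_{1,j}ᴴ)|²` of the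
`n`-step output state as `∑_{i,j} tr(K_{1,i} ρ₁ K_{1,j}ᴴ) · conj tr(K_{2,i} ρ₂ K_{2,j}ᴴ)`, a
quadratic expression in `T₁₂ⁿ`, so it tends to `0`. But that output state is a Gram matrix of
vectors in a space of dimension `d₁²`, so its purity is at least `1 / d₁²`.
-/

open scoped Topology

lemma krausWord_cons {d k n : ℕ} (V : Matrix (Fin d × Fin k) (Fin d) ℂ) (j : Fin k)
    (i : Fin n → Fin k) : krausWord V (Fin.cons j i) = krausWord V i * kraus V j := by
  simp [krausWord, List.ofFn_succ]

section Chan12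

variable {d₁ d₂ k : ℕ} (V₁ : Matrix (Fin d₁ × Fin k) (Fin d₁) ℂ)
  (V₂ : Matrix (Fin d₂ × Fin k) (Fin d₂) ℂ)

lemma chan12_eq_sum (X : Matrix (Fin d₁) (Fin d₂) ℂ) :
    chan12 V₁ V₂ X = ∑ j : Fin k, (kraus V₁ j)ᴴ * X * kraus V₂ j := by
  ext a b
  simp only [chan12, kraus, blk, Matrix.sum_apply, mul_apply, conjTranspose_apply,
    kroneckerMap_apply, one_apply, Fintype.sum_prod_type, mul_ite, mul_one, mul_zero,
    Finset.sum_ite_eq', Finset.mem_univ, if_true, Finset.sum_mul]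
  exact Finset.sum_comm

def chan12Lin : Module.End ℂ (Matrix (Fin d₁) (Fin d₂) ℂ) where
  toFun := chan12 V₁ V₂
  map_add' X Y := by simp [chan12, add_kronecker, Matrix.mul_add, Matrix.add_mul]
  map_smul' c X := by simp [chan12, smul_kronecker]

@[simp]
lemma chan12Lin_apply (X : Matrix (Fin d₁) (Fin d₂) ℂ) :
    chan12Lin V₁ V₂ X = chan12 V₁ V₂ X :=
  rfl

lemma chan12Lin_pow_apply (n : ℕ) (X : Matrix (Fin d₁) (Fin d₂) ℂ) :
    (chan12Lin V₁ V₂ ^ n) X = ∑ i : Fin n → Fin k, (krausWord V₁ i)ᴴ * X * krausWord V₂ i := by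
  induction n with
  | zero => simp [krausWord]
  | succ n ih =>
    rw [pow_succ', Module.End.mul_apply, ih, ← (Fin.consEquiv fun _ => Fin k).sum_comp,
      Fintype.sum_prod_type]
    simp only [Fin.consEquiv, Equiv.coe_fn_mk, krausWord_cons, conjTranspose_mul, chan12Lin_apply,
      chan12_eq_sum, Matrix.mul_sum, Matrix.sum_mul, Matrix.mul_assoc]

end Chan12

section Isometry

variable {d k : ℕ} {V : Matrix (Fin d × Fin k) (Fin d) ℂ}

lemma chan12_self_one (hV : Vᴴ * V = 1) : chan12 V V 1 = 1 := by
  rw [chan12, one_kronecker_one, Matrix.mul_one, hV]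

lemma sum_krausWord_conjTranspose_mul_self (hV : Vᴴ * V = 1) (n : ℕ) :
    ∑ i : Fin n → Fin k, (krausWord V i)ᴴ * krausWord V i = 1 := by
  have hfix : chan12Lin V V 1 = 1 := chan12_self_one hV
  simpa using (chan12Lin_pow_apply V V n 1).symm.trans
    (by rw [Module.End.coe_pow, Function.iterate_fixed hfix])

end Isometry

section L2OpNorm

open scoped Matrix.Norms.L2Operator

variable {m n ι : Type*} [Fintype m] [Fintype n] [Fintype ι] [DecidableEq n] [DecidableEq ι]

lemma l2_opNorm_one_le : ‖(1 : Matrix n n ℂ)‖ ≤ 1 := by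
  rw [← diagonal_one, l2_opNorm_diagonal]
  exact (pi_norm_le_iff_of_nonneg zero_le_one).mpr fun _ => by simp

lemma l2_opNorm_le_one_of_conjTranspose_mul_self_eq_one {V : Matrix m n ℂ} (hV : Vᴴ * V = 1) :
    ‖V‖ ≤ 1 := by
  have h : ‖V‖ * ‖V‖ ≤ 1 := by
    rw [← l2_opNorm_conjTranspose_mul_self, hV]
    exact l2_opNorm_one_le
  nlinarith [norm_nonneg V]

lemma l2_opNorm_kronecker_one_le (X : Matrix m n ℂ) : ‖X ⊗ₖ (1 : Matrix ι ι ℂ)‖ ≤ ‖X‖ := by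
  rw [l2_opNorm_def]
  refine ContinuousLinearMap.opNorm_le_bound _ (norm_nonneg X) fun x => ?_
  let col (j : ι) : EuclideanSpace ℂ n := WithLp.toLp 2 fun b => x (b, j)
  have hcol (j : ι) : ‖(EuclideanSpace.equiv m ℂ).symm (X *ᵥ (col j).ofLp)‖ ^ 2 ≤
      ‖X‖ ^ 2 * ‖col j‖ ^ 2 := by
    rw [← mul_pow]
    exact pow_le_pow_left₀ (norm_nonneg _) (l2_opNorm_mulVec X (col j)) 2
  have hentry (a : m) (j : ι) : (((toEuclideanLin ≪≫ₗ LinearMap.toContinuousLinearMap)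
      (X ⊗ₖ (1 : Matrix ι ι ℂ))) x).ofLp (a, j) = (X *ᵥ (col j).ofLp) a := by
    simp [toLpLin_apply, mulVec, dotProduct, Fintype.sum_prod_type, one_apply, col]
  refine le_of_sq_le_sq ?_ (by positivity)
  rw [mul_pow, EuclideanSpace.norm_sq_eq, EuclideanSpace.norm_sq_eq]
  simp only [EuclideanSpace.norm_sq_eq] at hcol
  simp only [Fintype.sum_prod_type_right, hentry, Finset.mul_sum]
  exact Finset.sum_le_sum fun j _ => by simpa [col, Finset.mul_sum] using hcol j

variable {d₁ d₂ k : ℕ} {V₁ : Matrix (Fin d₁ × Fin k) (Fin d₁) ℂ}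
  {V₂ : Matrix (Fin d₂ × Fin k) (Fin d₂) ℂ}

lemma l2_opNorm_chan12_le (hV₁ : V₁ᴴ * V₁ = 1) (hV₂ : V₂ᴴ * V₂ = 1)
    (X : Matrix (Fin d₁) (Fin d₂) ℂ) : ‖chan12 V₁ V₂ X‖ ≤ ‖X‖ := calc
  ‖chan12 V₁ V₂ X‖ ≤ ‖V₁ᴴ‖ * ‖X ⊗ₖ (1 : Matrix (Fin k) (Fin k) ℂ)‖ * ‖V₂‖ :=
    (l2_opNorm_mul _ _).trans (by gcongr; exact l2_opNorm_mul _ _)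
  _ ≤ 1 * ‖X‖ * 1 := by
    gcongr
    · rw [l2_opNorm_conjTranspose]
      exact l2_opNorm_le_one_of_conjTranspose_mul_self_eq_one hV₁
    · exact l2_opNorm_kronecker_one_le X
    · exact l2_opNorm_le_one_of_conjTranspose_mul_self_eq_one hV₂
  _ = ‖X‖ := by ring

lemma norm_le_one_of_chan12_eq_smul (hV₁ : V₁ᴴ * V₁ = 1) (hV₂ : V₂ᴴ * V₂ = 1) {c : ℂ}
    {F : Matrix (Fin d₁) (Fin d₂) ℂ} (hF : F ≠ 0) (hcF : chan12 V₁ V₂ F = c • F) : ‖c‖ ≤ 1 := by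
  have h : ‖c‖ * ‖F‖ ≤ 1 * ‖F‖ := by
    rw [← norm_smul, ← hcF, one_mul]
    exact l2_opNorm_chan12_le hV₁ hV₂ F
  exact le_of_mul_le_mul_right h (norm_pos_iff.mpr hF)

end L2OpNorm

section BanachAlgebra

variable {A : Type*} [NormedRing A] [NormedAlgebra ℂ A] [CompleteSpace A]

lemma spectralRadius_lt_one_of_forall_norm_lt_one {a : A} (h : ∀ c ∈ spectrum ℂ a, ‖c‖ < 1) :
    spectralRadius ℂ a < 1 := by
  rcases (spectrum ℂ a).eq_empty_or_nonempty with hempty | hne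
  · simp [spectralRadius, hempty]
  · exact_mod_cast spectrum.spectralRadius_lt_of_forall_lt_of_nonempty hne
      fun c hc => by exact_mod_cast h c hc

lemma tendsto_pow_atTop_nhds_zero_of_spectralRadius_lt_one {a : A}
    (h : spectralRadius ℂ a < 1) : Tendsto (a ^ ·) atTop (𝓝 0) := by
  obtain ⟨q, hrq, hq1⟩ := ENNReal.lt_iff_exists_nnreal_btwn.mp h
  have hev : ∀ᶠ n : ℕ in atTop, ‖a ^ n‖ ≤ (q : ℝ) ^ n := by
    filter_upwards [(spectrum.pow_nnnorm_pow_one_div_tendsto_nhds_spectralRadius a).eventually_lt_const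
      hrq, eventually_gt_atTop 0] with n hn hn0
    rw [one_div, ENNReal.rpow_inv_lt_iff (by positivity), ENNReal.rpow_natCast] at hn
    exact_mod_cast hn.le
  exact squeeze_zero_norm' hev (tendsto_pow_atTop_nhds_zero_of_lt_one q.2 (by exact_mod_cast hq1))

end BanachAlgebra

lemma tendsto_pow_apply_nhds_zero_of_forall_hasEigenvalue {E : Type*} [NormedAddCommGroup E]
    [NormedSpace ℂ E] [FiniteDimensional ℂ E] (f : Module.End ℂ E)
    (hf : ∀ c, f.HasEigenvalue c → ‖c‖ < 1) (x : E) :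
    Tendsto (fun N => (f ^ N) x) atTop (𝓝 0) := by
  have : CompleteSpace E := FiniteDimensional.complete ℂ E
  let g : E →L[ℂ] E := LinearMap.toContinuousLinearMap f
  have hg : Tendsto (g ^ ·) atTop (𝓝 0) := by
    refine tendsto_pow_atTop_nhds_zero_of_spectralRadius_lt_one
      (spectralRadius_lt_one_of_forall_norm_lt_one fun c hc => hf c ?_)
    rw [ContinuousLinearMap.spectrum_eq] at hc
    exact Module.End.hasEigenvalue_iff_mem_spectrum.mpr hc
  have hgx := ((ContinuousLinearMap.apply ℂ E x).continuous.tendsto 0).comp hg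
  simpa [g, Function.comp_def, Module.End.coe_pow] using hgx

section Sandwich

variable {ι m n : Type*} [Fintype ι] [Fintype m] [Fintype n] [DecidableEq m] [DecidableEq n]

lemma trace_sandwich_single (A A' : Matrix m m ℂ) (B B' : Matrix n n ℂ)
    (ρ₁ : Matrix m m ℂ) (ρ₂ : Matrix n n ℂ) (p : m) (p' : n) :
    ((Aᴴ * single p p' (1 : ℂ) * B)ᴴ * ρ₁ * (A'ᴴ * single p p' (1 : ℂ) * B') * ρ₂ᴴ).trace =
      (A * ρ₁ * A'ᴴ) p p * (B' * ρ₂ᴴ * Bᴴ) p' p' := by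
  have hcycle : ((Aᴴ * single p p' (1 : ℂ) * B)ᴴ * ρ₁ * (A'ᴴ * single p p' (1 : ℂ) * B') *
      ρ₂ᴴ).trace =
      (single p' p (1 : ℂ) * (A * ρ₁ * A'ᴴ) * single p p' (1 : ℂ) * (B' * ρ₂ᴴ * Bᴴ)).trace := by
    simp only [conjTranspose_mul, conjTranspose_conjTranspose, conjTranspose_single, star_one,
      Matrix.mul_assoc]
    rw [trace_mul_comm]
    simp only [Matrix.mul_assoc]
  rw [hcycle, single_mul_mul_single, trace_single_mul, one_mul, mul_one, smul_eq_mul]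

lemma sum_trace_sandwich_single (A : ι → Matrix m m ℂ) (B : ι → Matrix n n ℂ)
    (ρ₁ : Matrix m m ℂ) (ρ₂ : Matrix n n ℂ) :
    ∑ p : m, ∑ p' : n, ((∑ i, (A i)ᴴ * single p p' (1 : ℂ) * B i)ᴴ * ρ₁ *
        (∑ i, (A i)ᴴ * single p p' (1 : ℂ) * B i) * ρ₂ᴴ).trace =
      ∑ i, ∑ j, (A i * ρ₁ * (A j)ᴴ).trace * conj (B i * ρ₂ * (B j)ᴴ).trace := by
  simp only [conjTranspose_sum, Matrix.sum_mul, Matrix.mul_sum, trace_sum, trace_sandwich_single]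
  simp_rw [Finset.sum_comm (γ := m), Finset.sum_comm (γ := n)]
  rw [Finset.sum_comm]
  refine Finset.sum_congr rfl fun i _ => Finset.sum_congr rfl fun j _ => ?_
  rw [← RCLike.star_def, ← trace_conjTranspose, trace, trace, Finset.sum_mul_sum]
  simp only [diag, conjTranspose_mul, conjTranspose_conjTranspose, Matrix.mul_assoc]

end Sandwich

section MatrixIterates

-- Any norm will do here: the sup norm induces the usual topology on matrices.
attribute [local instance] Matrix.normedAddCommGroup Matrix.normedSpace

lemma tendsto_sum_trace_sandwich_pow_single {m n : Type*} [Fintype m] [Fintype n]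
    [DecidableEq m] [DecidableEq n] (f : Module.End ℂ (Matrix m n ℂ))
    (hf : ∀ c, f.HasEigenvalue c → ‖c‖ < 1) (ρ₁ : Matrix m m ℂ) (ρ₂ : Matrix n n ℂ) :
    Tendsto (fun N => ∑ p : m, ∑ p' : n,
      (((f ^ N) (single p p' 1))ᴴ * ρ₁ * (f ^ N) (single p p' 1) * ρ₂ᴴ).trace) atTop (𝓝 0) := by
  have hcont : Continuous fun Y : Matrix m n ℂ => (Yᴴ * ρ₁ * Y * ρ₂ᴴ).trace := by fun_prop
  simpa using tendsto_finsetSum _ fun p _ => tendsto_finsetSum _ fun p' _ =>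
    (hcont.tendsto 0).comp (tendsto_pow_apply_nhds_zero_of_forall_hasEigenvalue f hf _)

end MatrixIterates

lemma sum_trace_sandwich_chan12Lin_pow_single {d₁ d₂ k : ℕ}
    (V₁ : Matrix (Fin d₁ × Fin k) (Fin d₁) ℂ) (V₂ : Matrix (Fin d₂ × Fin k) (Fin d₂) ℂ)
    (ρ₁ : Matrix (Fin d₁) (Fin d₁) ℂ) (ρ₂ : Matrix (Fin d₂) (Fin d₂) ℂ) (N : ℕ) :
    ∑ p, ∑ p', (((chan12Lin V₁ V₂ ^ N) (single p p' 1))ᴴ * ρ₁ *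
        (chan12Lin V₁ V₂ ^ N) (single p p' 1) * ρ₂ᴴ).trace =
      ∑ i, ∑ j, outState V₁ ρ₁ N i j * conj (outState V₂ ρ₂ N i j) := by
  simp only [chan12Lin_pow_apply]
  exact sum_trace_sandwich_single _ _ ρ₁ ρ₂

section Purity

variable {m ι : Type*} [Fintype m] [Fintype ι]

lemma trace_conjTranspose_mul_self_eq_sum_norm_sq (M : Matrix m ι ℂ) :
    (Mᴴ * M).trace = ((∑ p, ∑ i, ‖M p i‖ ^ 2 : ℝ) : ℂ) := by
  rw [Finset.sum_comm]
  simp [trace, mul_apply, RCLike.star_def, RCLike.conj_mul]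

lemma sum_norm_sq_conjTranspose_mul_self (X : Matrix m ι ℂ) :
    ∑ i, ∑ j, ‖(Xᴴ * X) i j‖ ^ 2 = ∑ p, ∑ q, ‖(X * Xᴴ) p q‖ ^ 2 := by
  have key : ((Xᴴ * X)ᴴ * (Xᴴ * X)).trace = ((X * Xᴴ)ᴴ * (X * Xᴴ)).trace := by
    simp only [conjTranspose_mul, conjTranspose_conjTranspose, Matrix.mul_assoc]
    rw [trace_mul_comm]
    simp only [Matrix.mul_assoc]
  simp only [trace_conjTranspose_mul_self_eq_sum_norm_sq] at key
  exact_mod_cast key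

lemma norm_trace_sq_le_card_mul_sum_norm_sq (M : Matrix m m ℂ) :
    ‖M.trace‖ ^ 2 ≤ Fintype.card m * ∑ p, ∑ q, ‖M p q‖ ^ 2 := calc
  ‖M.trace‖ ^ 2 ≤ (∑ p, ‖M p p‖) ^ 2 := by gcongr; exact norm_sum_le _ _
  _ ≤ Fintype.card m * ∑ p, ‖M p p‖ ^ 2 := sq_sum_le_card_mul_sum_sq
  _ ≤ Fintype.card m * ∑ p, ∑ q, ‖M p q‖ ^ 2 := by
    gcongr with p
    exact Finset.single_le_sum (f := fun q => ‖M p q‖ ^ 2) (fun _ _ => by positivity)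
      (Finset.mem_univ p)

lemma norm_trace_sq_le_card_mul_sum_norm_sq_gram (X : Matrix m ι ℂ) :
    ‖(Xᴴ * X).trace‖ ^ 2 ≤ Fintype.card m * ∑ i, ∑ j, ‖(Xᴴ * X) i j‖ ^ 2 := by
  rw [trace_mul_comm, sum_norm_sq_conjTranspose_mul_self]
  exact norm_trace_sq_le_card_mul_sum_norm_sq _

end Purity

lemma one_le_sq_mul_sum_norm_outState_sq {d k : ℕ} {V : Matrix (Fin d × Fin k) (Fin d) ℂ}
    (hV : Vᴴ * V = 1) {ρ : Matrix (Fin d) (Fin d) ℂ} (hρ : IsState ρ) (n : ℕ) :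
    1 ≤ (d : ℝ) ^ 2 * ∑ i, ∑ j, ‖outState V ρ n i j‖ ^ 2 := by
  obtain ⟨B, rfl⟩ : ∃ B : Matrix (Fin d) (Fin d) ℂ, ρ = star B * B := by
    open scoped MatrixOrder in exact CStarAlgebra.nonneg_iff_eq_star_mul_self.mp hρ.1.nonneg
  let X : Matrix (Fin d × Fin d) (Fin n → Fin k) ℂ :=
    of fun qp i => (krausWord V i * Bᴴ) qp.1 qp.2
  have hgram (i j) : outState V (star B * B) n i j = (Xᴴ * X) j i := by
    have hX : (Xᴴ * X) j i = ((krausWord V j * Bᴴ)ᴴ * (krausWord V i * Bᴴ)).trace := by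
      simp only [X, trace, diag, mul_apply, conjTranspose_apply, of_apply, Fintype.sum_prod_type]
      exact Finset.sum_comm
    rw [hX, trace_mul_comm, outState, star_eq_conjTranspose]
    simp only [conjTranspose_mul, conjTranspose_conjTranspose, Matrix.mul_assoc]
  have htrace : (Xᴴ * X).trace = 1 := calc
    (Xᴴ * X).trace = ∑ i, outState V (star B * B) n i i := by simp only [trace, diag, hgram]
    _ = ((∑ i, (krausWord V i)ᴴ * krausWord V i) * (star B * B)).trace := by
      simp only [outState, Matrix.sum_mul, trace_sum]
      refine Finset.sum_congr rfl fun i _ => ?_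
      rw [trace_mul_comm, ← Matrix.mul_assoc]
    _ = 1 := by rw [sum_krausWord_conjTranspose_mul_self hV, Matrix.one_mul, hρ.2]
  have h := norm_trace_sq_le_card_mul_sum_norm_sq_gram X
  rw [htrace, norm_one, one_pow, Fintype.card_prod, Fintype.card_fin] at h
  simp_rw [hgram]
  rw [Finset.sum_comm]
  push_cast at h
  linarith

/-- Lemma: output equivalence forces a peripheral eigenvalue of `T₁₂`. -/
theorem outputEquiv_chan12_peripheral_eigenvalue {d₁ d₂ k : ℕ}
    (V₁ : Matrix (Fin d₁ × Fin k) (Fin d₁) ℂ) (ρ₁ : Matrix (Fin d₁) (Fin d₁) ℂ)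
    (V₂ : Matrix (Fin d₂ × Fin k) (Fin d₂) ℂ) (ρ₂ : Matrix (Fin d₂) (Fin d₂) ℂ)
    (h₁ : IsIrreducible V₁ ρ₁) (h₂ : IsIrreducible V₂ ρ₂)
    (heq : OutputEquiv V₁ ρ₁ V₂ ρ₂) :
    ∃ (c : ℂ) (F : Matrix (Fin d₁) (Fin d₂) ℂ), ‖c‖ = 1 ∧ F ≠ 0 ∧
      chan12 V₁ V₂ F = c • F := by
  obtain ⟨hV₁, hρ₁, -⟩ := h₁
  obtain ⟨hV₂, -⟩ := h₂
  by_contra! hnone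
  have hdisc (c : ℂ) (hc : (chan12Lin V₁ V₂).HasEigenvalue c) : ‖c‖ < 1 := by
    obtain ⟨F, hF⟩ := hc.exists_hasEigenvector
    have hcF : chan12 V₁ V₂ F = c • F := hF.apply_eq_smul
    exact (norm_le_one_of_chan12_eq_smul hV₁ hV₂ hF.2 hcF).lt_of_ne fun h => hnone c F h hF.2 hcF
  have hpurity : ∀ᶠ N in atTop, ∑ p, ∑ p', (((chan12Lin V₁ V₂ ^ N) (single p p' 1))ᴴ * ρ₁ *
      (chan12Lin V₁ V₂ ^ N) (single p p' 1) * ρ₂ᴴ).trace =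
      ((∑ i, ∑ j, ‖outState V₁ ρ₁ N i j‖ ^ 2 : ℝ) : ℂ) := by
    filter_upwards [eventually_ge_atTop 1] with N hN
    simp only [sum_trace_sandwich_chan12Lin_pow_single, outState, ← heq N hN, RCLike.mul_conj]
    push_cast
    rfl
  have hlim : Tendsto (fun N => ∑ i, ∑ j, ‖outState V₁ ρ₁ N i j‖ ^ 2) atTop (𝓝 0) :=
    Filter.tendsto_ofReal_iff.mp <| by
      rw [Complex.ofReal_zero]
      exact (tendsto_sum_trace_sandwich_pow_single _ hdisc ρ₁ ρ₂).congr' hpurity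
  have h := ge_of_tendsto (hlim.const_mul ((d₁ : ℝ) ^ 2))
    (.of_forall fun N => one_le_sq_mul_sum_norm_outState_sq hV₁ hρ₁ N)
  norm_num at h

end QMCPaper
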